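/- Let (F,G) be a WZ pair and s, t ≥ 1 integers. Define F_{s,t}(n,k) = Σ_{j=0}^{t-1} F(sn, tk+j) and G_{s,t}(n,k) = Σ_{i=0}^{s-1} G(sn+i, tk). Then (F_{s,t}, G_{s,t}) is also a WZ pair: F_{s,t}(n+1,k) - F_{s,t}(n,k) = G_{s,t}(n,k+1) - G_{s,t}(n,k). -/

import Mathlib

/-!
Summing the WZ relation over the `s × t` block `[sn, sn + s) × [tk, tk + t)` telescopes in `n` on
the left and in `k` on the right: this is a discrete Green's theorem for the rectangle.
-/

open Finset

def IsWZPair {M : Type*} [AddCommGroup M] (F G : ℕ → ℕ → M) : Prop :=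
  ∀ n k, F (n + 1) k - F n k = G n (k + 1) - G n k

namespace IsWZPair

variable {M : Type*} [AddCommGroup M] {F G : ℕ → ℕ → M}

theorem add_sub_eq_sum (h : IsWZPair F G) (n a k : ℕ) :
    F (n + a) k - F n k = ∑ i ∈ range a, (G (n + i) (k + 1) - G (n + i) k) :=
  (sum_range_sub (fun i => F (n + i) k) a).symm.trans (sum_congr rfl fun i _ => h (n + i) k)

theorem sum_sub_eq_sum_sub (h : IsWZPair F G) (n a k b : ℕ) :
    ∑ j ∈ range b, (F (n + a) (k + j) - F n (k + j)) =
      ∑ i ∈ range a, (G (n + i) (k + b) - G (n + i) k) :=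
  calc ∑ j ∈ range b, (F (n + a) (k + j) - F n (k + j))
      = ∑ j ∈ range b, ∑ i ∈ range a, (G (n + i) (k + j + 1) - G (n + i) (k + j)) :=
        sum_congr rfl fun j _ => h.add_sub_eq_sum n a (k + j)
    _ = ∑ i ∈ range a, ∑ j ∈ range b, (G (n + i) (k + j + 1) - G (n + i) (k + j)) := sum_comm
    _ = ∑ i ∈ range a, (G (n + i) (k + b) - G (n + i) k) :=
        sum_congr rfl fun i _ => sum_range_sub (fun j => G (n + i) (k + j)) b

end IsWZPair

theorem wz_pair_double_dilation_general (F G : ℕ → ℕ → ℝ)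
    (hWZ : ∀ n k, F (n + 1) k - F n k = G n (k + 1) - G n k)
    (s t : ℕ) :
    ∀ n k,
      (∑ j ∈ Finset.range t, F (s * (n + 1)) (t * k + j)) -
      (∑ j ∈ Finset.range t, F (s * n) (t * k + j)) =
      (∑ i ∈ Finset.range s, G (s * n + i) (t * (k + 1))) -
      (∑ i ∈ Finset.range s, G (s * n + i) (t * k)) := by
  intro n k
  rw [← sum_sub_distrib, ← sum_sub_distrib, mul_add_one, mul_add_one]
  exact IsWZPair.sum_sub_eq_sum_sub hWZ (s * n) s (t * k) t

theorem wz_pair_double_dilation (F G : ℕ → ℕ → ℝ)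
    (hWZ : ∀ n k, F (n + 1) k - F n k = G n (k + 1) - G n k)
    (s t : ℕ) (hs : 1 ≤ s) (ht : 1 ≤ t) :
    ∀ n k,
      (∑ j ∈ Finset.range t, F (s * (n + 1)) (t * k + j)) -
      (∑ j ∈ Finset.range t, F (s * n) (t * k + j)) =
      (∑ i ∈ Finset.range s, G (s * n + i) (t * (k + 1))) -
      (∑ i ∈ Finset.range s, G (s * n + i) (t * k)) :=
  wz_pair_double_dilation_general F G hWZ s t
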